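/- arXiv:2211.02550 — 2 statements merged into one kernel-verified Lean document; each statement's English description precedes it below -/
import Mathlib

section
/- For every integer n ≥ 2, the number b(n) of permutations π of {1,…,n} having exactly one index i with 1 ≤ i ≤ n−1 such that π_{i+1} − π_i = 1 equals (n−1)·a(n−1), where a(m) = a_{1,1}(m) is the number of permutations σ of {1,…,m} such that σ_{i+1} − σ_i ≠ 1 for all 1 ≤ i ≤ m−1. -/
/-- The number of rising successions of a permutation `π` of `{0,…,n-1}`
(equivalently `{1,…,n}`): indices `i` such that `π (i+1) - π i = 1`. -/
def risingCount (n : ℕ) (π : Equiv.Perm (Fin n)) : ℕ :=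
  (Finset.univ.filter fun i : Fin n =>
    ∃ j : Fin n, (j : ℕ) = (i : ℕ) + 1 ∧
      ((π j : ℕ) : ℤ) - ((π i : ℕ) : ℤ) = 1).card

/-- The set of permutations of `{1,…,n}` with no rising succession,
counted by `a(n) = a_{1,1}(n)`. -/
def noRise (n : ℕ) : Finset (Equiv.Perm (Fin n)) :=
  Finset.univ.filter fun π => risingCount n π = 0

/-- The set of permutations of `{1,…,n}` with exactly one rising succession,
counted by `b(n)`. -/
def oneRise (n : ℕ) : Finset (Equiv.Perm (Fin n)) :=
  Finset.univ.filter fun π => risingCount n π = 1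

/-! Given a permutation `σ` of `Fin (n + 1)` and a position `q`, insert the new value `σ q + 1`
right after position `q`, shifting later positions and larger values up by one. This creates a
rise at `q` and neither creates nor destroys any other, so the number of rises goes up by exactly
one. Conversely, deleting the upper entry of any rise undoes the insertion. On permutations without
rises the only rise of the result sits at `q`, which recovers `q` and then `σ`; so the insertion is
a bijection from `Fin (n + 1) × noRise (n + 1)` onto `oneRise (n + 2)`. -/

open Finset Equiv

namespace Fin

variable {n : ℕ} {b x y : Fin (n + 1)}

lemma succ_succAbove_covBy_succ_succAbove :
    b.succ.succAbove x ⋖ b.succ.succAbove y ↔ x ⋖ y ∧ x ≠ b := by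
  simp only [covBy_iff, Nat.covBy_iff_add_one_eq, succAbove, lt_def, val_castSucc, val_succ, ne_eq,
    Fin.ext_iff]
  split_ifs <;> grind

lemma succ_succAbove_covBy_succ : b.succ.succAbove x ⋖ b.succ ↔ x = b := by
  simp only [covBy_iff, Nat.covBy_iff_add_one_eq, succAbove, lt_def, val_castSucc, val_succ,
    Fin.ext_iff]
  split_ifs <;> grind

lemma succ_covBy_succ_succAbove : b.succ ⋖ b.succ.succAbove y ↔ b ⋖ y := by
  simp only [covBy_iff, Nat.covBy_iff_add_one_eq, succAbove, lt_def, val_castSucc, val_succ]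
  split_ifs <;> grind

end Fin

namespace Equiv.Perm

variable {n : ℕ}

def insertAt (P V : Fin (n + 1)) (σ : Perm (Fin n)) : Perm (Fin (n + 1)) :=
  (finSuccEquiv' P).trans ((optionCongr σ).trans (finSuccEquiv' V).symm)

@[simp]
lemma insertAt_apply_self (P V : Fin (n + 1)) (σ : Perm (Fin n)) : insertAt P V σ P = V := by
  simp [insertAt]

@[simp]
lemma insertAt_apply_succAbove (P V : Fin (n + 1)) (σ : Perm (Fin n)) (j : Fin n) :
    insertAt P V σ (P.succAbove j) = V.succAbove (σ j) := by
  simp [insertAt]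

lemma insertAt_injective (P V : Fin (n + 1)) : Function.Injective (insertAt P V) :=
  fun σ τ h ↦ Equiv.ext fun j ↦ by simpa using congr($h (P.succAbove j))

lemma exists_insertAt_eq (π : Perm (Fin (n + 1))) (P : Fin (n + 1)) :
    ∃ σ, insertAt P (π P) σ = π := by
  let σ : Perm (Fin n) := (finSuccAboveEquiv P).trans
    ((π.subtypeEquiv (p := (· ≠ P)) (q := (· ≠ π P)) fun _ ↦ π.injective.ne_iff.symm).trans
      (finSuccAboveEquiv (π P)).symm)
  have hσ (j : Fin n) : (π P).succAbove (σ j) = π (P.succAbove j) :=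
    congrArg Subtype.val ((finSuccAboveEquiv (π P)).apply_symm_apply _)
  refine ⟨σ, Equiv.ext fun i ↦ ?_⟩
  rcases Fin.eq_self_or_eq_succAbove P i with rfl | ⟨j, rfl⟩
  · simp
  · simp [hσ]

end Equiv.Perm

open Perm

def IsRiseAt {n : ℕ} (π : Perm (Fin n)) (i : Fin n) : Prop := ∃ j, i ⋖ j ∧ π i ⋖ π j

instance {n : ℕ} (π : Perm (Fin n)) : DecidablePred (IsRiseAt π) :=
  fun i ↦ decidable_of_iff (∃ j : Fin n, (i : ℕ) + 1 = j ∧ (π i : ℕ) + 1 = π j) <| by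
    simp only [IsRiseAt, Fin.covBy_iff, Nat.covBy_iff_add_one_eq]

lemma risingCount_eq_card {n : ℕ} (π : Perm (Fin n)) :
    risingCount n π = #{i | IsRiseAt π i} := by
  refine congrArg card (filter_congr fun i _ ↦ exists_congr fun j ↦ ?_)
  simp only [Fin.covBy_iff, Nat.covBy_iff_add_one_eq]
  omega

lemma mem_noRise_iff {n : ℕ} {σ : Perm (Fin n)} : σ ∈ noRise n ↔ ∀ i, ¬ IsRiseAt σ i := by
  simp [noRise, risingCount_eq_card, filter_eq_empty_iff]

section addRise

variable {n : ℕ} (q : Fin (n + 1)) (σ : Perm (Fin (n + 1)))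

def addRise : Perm (Fin (n + 2)) := insertAt q.succ (σ q).succ σ

lemma isRiseAt_addRise_succ : IsRiseAt (addRise q σ) q.succ ↔ IsRiseAt σ q := by
  simp only [IsRiseAt, Fin.exists_iff_succAbove q.succ, addRise, insertAt_apply_self,
    insertAt_apply_succAbove, Fin.succ_covBy_succ_succAbove, covBy_irrefl, false_and, false_or]

lemma isRiseAt_addRise_succAbove (x : Fin (n + 1)) :
    IsRiseAt (addRise q σ) (q.succ.succAbove x) ↔ x = q ∨ IsRiseAt σ x := by
  simp only [IsRiseAt, Fin.exists_iff_succAbove q.succ, addRise, insertAt_apply_self,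
    insertAt_apply_succAbove, Fin.succ_succAbove_covBy_succ,
    Fin.succ_succAbove_covBy_succ_succAbove, σ.injective.eq_iff, σ.injective.ne_iff]
  by_cases hx : x = q <;> simp [hx]

lemma risingCount_addRise : risingCount (n + 2) (addRise q σ) = risingCount (n + 1) σ + 1 := by
  rw [risingCount_eq_card, risingCount_eq_card, card_filter, card_filter,
    Fin.sum_univ_succAbove _ q.succ]
  simp only [isRiseAt_addRise_succ, isRiseAt_addRise_succAbove, Fin.sum_univ_succAbove _ q,
    Fin.succAbove_ne, true_or, false_or, if_true]
  ring

variable {q σ}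

lemma addRise_mem_oneRise_iff : addRise q σ ∈ oneRise (n + 2) ↔ σ ∈ noRise (n + 1) := by
  simp [oneRise, noRise, risingCount_addRise]

lemma isRiseAt_addRise_iff_of_mem_noRise (hσ : σ ∈ noRise (n + 1)) {i : Fin (n + 2)} :
    IsRiseAt (addRise q σ) i ↔ i = q.castSucc := by
  rw [mem_noRise_iff] at hσ
  rcases Fin.eq_self_or_eq_succAbove q.succ i with rfl | ⟨x, rfl⟩
  · simpa [isRiseAt_addRise_succ, hσ] using Fin.castSucc_lt_succ.ne'
  · rw [isRiseAt_addRise_succAbove, ← Fin.succAbove_succ_self, Fin.succAbove_right_inj]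
    simp [hσ]

lemma addRise_inj {q' : Fin (n + 1)} {σ' : Perm (Fin (n + 1))} (hσ : σ ∈ noRise (n + 1))
    (hσ' : σ' ∈ noRise (n + 1)) (h : addRise q σ = addRise q' σ') : q = q' ∧ σ = σ' := by
  have hq : q = q' := by
    have hrise := (isRiseAt_addRise_iff_of_mem_noRise (q := q) hσ).2 rfl
    rw [h, isRiseAt_addRise_iff_of_mem_noRise hσ'] at hrise
    exact Fin.castSucc_injective _ hrise
  subst hq
  have hV : (σ q).succ = (σ' q).succ := by simpa [addRise] using congr($h q.succ)
  unfold addRise at h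
  rw [hV] at h
  exact ⟨rfl, insertAt_injective _ _ h⟩

lemma exists_addRise_eq_of_isRiseAt {π : Perm (Fin (n + 2))} {i : Fin (n + 2)}
    (hi : IsRiseAt π i) : ∃ q σ, addRise q σ = π := by
  obtain ⟨j, hij, hπij⟩ := hi
  obtain ⟨q, rfl⟩ := Fin.exists_succ_eq_of_ne_zero ((Fin.zero_le i).trans_lt hij.lt).ne'
  obtain ⟨σ, hσ⟩ := exists_insertAt_eq π q.succ
  obtain ⟨V, hV⟩ : ∃ V, π q.succ = V := ⟨_, rfl⟩
  rw [hV] at hσ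
  subst hσ
  rcases Fin.eq_self_or_eq_succAbove q.succ i with rfl | ⟨x, rfl⟩
  · exact absurd hij covBy_irrefl
  obtain rfl := Fin.succ_succAbove_covBy_succ.1 hij
  simp only [insertAt_apply_self, insertAt_apply_succAbove] at hπij
  obtain ⟨w, rfl⟩ := Fin.exists_succ_eq_of_ne_zero ((Fin.zero_le _).trans_lt hπij.lt).ne'
  obtain rfl := Fin.succ_succAbove_covBy_succ.1 hπij
  exact ⟨x, σ, rfl⟩

end addRise

/-- For `n ≥ 2`, `b(n) = (n-1)·a(n-1)`. -/
theorem oneRise_card (n : ℕ) (hn : 2 ≤ n) :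
    (oneRise n).card = (n - 1) * (noRise (n - 1)).card := by
  obtain ⟨m, rfl⟩ : ∃ m, n = m + 2 := ⟨n - 2, by omega⟩
  suffices ((univ : Finset (Fin (m + 1))) ×ˢ noRise (m + 1)).card = (oneRise (m + 2)).card by
    simpa [card_product] using this.symm
  refine card_bij (fun x _ ↦ addRise x.1 x.2) (fun x hx ↦ ?_) (fun x hx y hy h ↦ ?_)
    (fun π hπ ↦ ?_)
  · exact addRise_mem_oneRise_iff.2 (mem_product.1 hx).2
  · exact Prod.ext_iff.2 (addRise_inj (mem_product.1 hx).2 (mem_product.1 hy).2 h)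
  · obtain ⟨i, hi⟩ : (filter (IsRiseAt π) univ).Nonempty := by
      rw [← card_pos, ← risingCount_eq_card]
      simp_all [oneRise]
    obtain ⟨q, σ, rfl⟩ := exists_addRise_eq_of_isRiseAt (mem_filter.1 hi).2
    exact ⟨(q, σ), mem_product.2 ⟨mem_univ q, addRise_mem_oneRise_iff.1 hπ⟩, rfl⟩
end

section
/- For every integer n ≥ 2, the number a(n) = a_{1,1}(n) of permutations of {1,…,n} with no rising succession satisfies a(n) = (n−1)·a(n−1) + b(n−1), where b(m) is the number of permutations of {1,…,m} with exactly one rising succession. -/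
namespace NRrec

open Equiv Finset

variable {n : ℕ}

/-- Insert the maximal value `n` at position `p` into (the word of) a
permutation `σ` of `Fin n`. -/
def ins (σ : Equiv.Perm (Fin n)) (p : Fin (n + 1)) : Equiv.Perm (Fin (n + 1)) :=
  ((finSuccEquiv' p).trans σ.optionCongr).trans (finSuccEquiv' (Fin.last n)).symm

lemma ins_apply_self (σ : Equiv.Perm (Fin n)) (p : Fin (n + 1)) :
    ins σ p p = Fin.last n := by
  simp [ins, finSuccEquiv'_at, finSuccEquiv'_symm_none]

lemma ins_apply_succAbove (σ : Equiv.Perm (Fin n)) (p : Fin (n + 1)) (j : Fin n) :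
    ins σ p (p.succAbove j) = (σ j).castSucc := by
  simp [ins, finSuccEquiv'_succAbove, finSuccEquiv'_symm_some, Fin.succAbove_last]

lemma ins_val_lt (σ : Equiv.Perm (Fin n)) (p : Fin (n + 1)) (q : Fin (n + 1))
    (k : ℕ) (hk : k < n) (hq : (q : ℕ) = k) (h : k < (p : ℕ)) :
    ((ins σ p q : Fin (n + 1)) : ℕ) = (σ ⟨k, hk⟩ : ℕ) := by
  have hs : p.succAbove ⟨k, hk⟩ = q := by
    rw [Fin.succAbove_of_castSucc_lt]
    · exact Fin.ext hq.symm
    · exact Fin.lt_def.mpr (by simpa using h)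
  rw [← hs, ins_apply_succAbove]
  simp

lemma ins_val_eq (σ : Equiv.Perm (Fin n)) (p : Fin (n + 1)) (q : Fin (n + 1))
    (hq : (q : ℕ) = (p : ℕ)) :
    ((ins σ p q : Fin (n + 1)) : ℕ) = n := by
  have : q = p := Fin.ext hq
  rw [this, ins_apply_self]
  simp

lemma ins_val_gt (σ : Equiv.Perm (Fin n)) (p : Fin (n + 1)) (q : Fin (n + 1))
    (k : ℕ) (hk : k < n) (hq : (q : ℕ) = k + 1) (h : (p : ℕ) ≤ k) :
    ((ins σ p q : Fin (n + 1)) : ℕ) = (σ ⟨k, hk⟩ : ℕ) := by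
  have hs : p.succAbove ⟨k, hk⟩ = q := by
    rw [Fin.succAbove_of_le_castSucc]
    · exact Fin.ext hq.symm
    · exact Fin.le_def.mpr (by simpa using h)
  rw [← hs, ins_apply_succAbove]
  simp

/-- The position of the maximal value. -/
def pos (π : Equiv.Perm (Fin (n + 1))) : Fin (n + 1) := π.symm (Fin.last n)

/-- Auxiliary `Option`-level equiv used to define deletion. -/
def optAux (π : Equiv.Perm (Fin (n + 1))) : Option (Fin n) ≃ Option (Fin n) :=
  ((finSuccEquiv' (pos π)).symm.trans π).trans (finSuccEquiv' (Fin.last n))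

lemma optAux_none (π : Equiv.Perm (Fin (n + 1))) : optAux π none = none := by
  simp [optAux, pos, finSuccEquiv'_symm_none, finSuccEquiv'_at]

/-- Delete the maximal value from (the word of) a permutation of `Fin (n+1)`. -/
def del (π : Equiv.Perm (Fin (n + 1))) : Equiv.Perm (Fin n) :=
  Equiv.removeNone (optAux π)

lemma optionCongr_removeNone {α β : Type*} (e : Option α ≃ Option β)
    (h : e none = none) : (Equiv.removeNone e).optionCongr = e := by
  apply Equiv.ext
  intro x
  cases x with
  | none => simp [h]
  | some a =>
      have hx : ∃ x', e (some a) = some x' := by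
        cases hx : e (some a) with
        | none => exact absurd (e.injective (hx.trans h.symm)) (by simp)
        | some b => exact ⟨b, rfl⟩
      have h2 := Equiv.removeNone_some e hx
      simp only [Equiv.optionCongr_apply, Option.map_some]
      exact h2

lemma ins_del (π : Equiv.Perm (Fin (n + 1))) : ins (del π) (pos π) = π := by
  unfold ins del
  rw [optionCongr_removeNone _ (optAux_none π)]
  ext q
  simp [optAux, Equiv.trans_apply]

lemma pos_ins (σ : Equiv.Perm (Fin n)) (p : Fin (n + 1)) : pos (ins σ p) = p := by
  unfold pos
  rw [Equiv.symm_apply_eq]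
  exact (ins_apply_self σ p).symm

lemma del_ins (σ : Equiv.Perm (Fin n)) (p : Fin (n + 1)) : del (ins σ p) = σ := by
  have h : optAux (ins σ p) = σ.optionCongr := by
    unfold optAux
    rw [pos_ins]
    ext x
    simp [ins, Equiv.trans_apply]
  unfold del
  rw [h, Equiv.removeNone_optionCongr]

/-- The set of succession positions, in a convenient form. -/
def riseSet (π : Equiv.Perm (Fin (n + 1))) : Finset (Fin n) :=
  Finset.univ.filter fun i =>
    ((π i.succ : Fin (n + 1)) : ℕ) = ((π i.castSucc : Fin (n + 1)) : ℕ) + 1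

lemma mem_riseSet {π : Equiv.Perm (Fin (n + 1))} {i : Fin n} :
    i ∈ riseSet π ↔
      ((π i.succ : Fin (n + 1)) : ℕ) = ((π i.castSucc : Fin (n + 1)) : ℕ) + 1 := by
  simp [riseSet]

lemma risingCount_eq (π : Equiv.Perm (Fin (n + 1))) :
    risingCount (n + 1) π = (riseSet π).card := by
  unfold risingCount
  refine (Finset.card_bij (fun (i : Fin n) _ => (i.castSucc : Fin (n + 1)))
    ?_ ?_ ?_).symm
  · intro a ha
    rw [mem_riseSet] at ha
    simp only [Finset.mem_filter, Finset.mem_univ, true_and]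
    refine ⟨a.succ, by simp, ?_⟩
    omega
  · intro i _ j _ h
    exact Fin.castSucc_injective _ h
  · intro b hb
    simp only [Finset.mem_filter, Finset.mem_univ, true_and] at hb
    obtain ⟨j, hj1, hj2⟩ := hb
    have hb' : (b : ℕ) < n := by have := j.isLt; omega
    refine ⟨⟨(b : ℕ), hb'⟩, ?_, Fin.ext rfl⟩
    rw [mem_riseSet]
    have hjeq : j = (⟨(b : ℕ), hb'⟩ : Fin n).succ := Fin.ext hj1
    have hbeq : b = (⟨(b : ℕ), hb'⟩ : Fin n).castSucc := Fin.ext rfl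
    rw [← hjeq, ← hbeq]
    omega

lemma risingCount_eq_zero_iff (π : Equiv.Perm (Fin (n + 1))) :
    risingCount (n + 1) π = 0 ↔
      ∀ i : Fin n, ¬ (((π i.succ : Fin (n + 1)) : ℕ) =
        ((π i.castSucc : Fin (n + 1)) : ℕ) + 1) := by
  rw [risingCount_eq, Finset.card_eq_zero, Finset.eq_empty_iff_forall_notMem]
  simp [riseSet]

/-- The key characterization: `ins σ p` has no rising succession iff every
succession of `σ` is precisely the pair broken by the insertion, and the
inserted maximal value does not sit right after the value `n`. -/
lemma valid_iff (σ : Equiv.Perm (Fin (n + 1))) (p : Fin (n + 2)) :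
    risingCount (n + 2) (ins σ p) = 0 ↔
      ((∀ j : Fin n, ((σ j.succ : Fin (n + 1)) : ℕ) =
          ((σ j.castSucc : Fin (n + 1)) : ℕ) + 1 → (j : ℕ) + 1 = (p : ℕ)) ∧
        ((p : ℕ) = 0 ∨
          ((σ ⟨(p : ℕ) - 1, by have := p.isLt; omega⟩ : Fin (n + 1)) : ℕ) ≠ n)) := by
  have hpLt := p.isLt
  rw [risingCount_eq_zero_iff]
  constructor
  · intro h
    constructor
    · intro j hj
      have hjLt := j.isLt
      by_contra hne
      rcases lt_or_gt_of_ne hne with hlt | hgt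
      · -- j + 1 < p : the succession survives at position j
        refine h ⟨(j : ℕ), by omega⟩ ?_
        have e1 : ((ins σ p (⟨(j : ℕ), by omega⟩ : Fin (n + 1)).succ : Fin (n + 2)) : ℕ)
            = ((σ ⟨(j : ℕ) + 1, by omega⟩ : Fin (n + 1)) : ℕ) :=
          ins_val_lt σ p _ ((j : ℕ) + 1) (by omega) rfl (by omega)
        have e2 : ((ins σ p (⟨(j : ℕ), by omega⟩ : Fin (n + 1)).castSucc :
              Fin (n + 2)) : ℕ)
            = ((σ ⟨(j : ℕ), by omega⟩ : Fin (n + 1)) : ℕ) :=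
          ins_val_lt σ p _ (j : ℕ) (by omega) rfl (by omega)
        rw [e1, e2]
        exact hj
      · -- p < j + 1 : the succession survives at position j + 1
        refine h ⟨(j : ℕ) + 1, by omega⟩ ?_
        have e1 : ((ins σ p (⟨(j : ℕ) + 1, by omega⟩ : Fin (n + 1)).succ :
              Fin (n + 2)) : ℕ)
            = ((σ ⟨(j : ℕ) + 1, by omega⟩ : Fin (n + 1)) : ℕ) :=
          ins_val_gt σ p _ ((j : ℕ) + 1) (by omega) rfl (by omega)
        have e2 : ((ins σ p (⟨(j : ℕ) + 1, by omega⟩ : Fin (n + 1)).castSucc :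
              Fin (n + 2)) : ℕ)
            = ((σ ⟨(j : ℕ), by omega⟩ : Fin (n + 1)) : ℕ) :=
          ins_val_gt σ p _ (j : ℕ) (by omega) rfl (by omega)
        rw [e1, e2]
        exact hj
    · -- if p > 0 and σ (p-1) = n then a new succession appears at position p - 1
      by_contra hc
      push_neg at hc
      obtain ⟨hp0, hval⟩ := hc
      refine h ⟨(p : ℕ) - 1, by omega⟩ ?_
      have e1 : ((ins σ p (⟨(p : ℕ) - 1, by omega⟩ : Fin (n + 1)).succ :
            Fin (n + 2)) : ℕ) = n + 1 :=
        ins_val_eq σ p _ (show (p : ℕ) - 1 + 1 = (p : ℕ) by omega)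
      have e2 : ((ins σ p (⟨(p : ℕ) - 1, by omega⟩ : Fin (n + 1)).castSucc :
            Fin (n + 2)) : ℕ)
          = ((σ ⟨(p : ℕ) - 1, by omega⟩ : Fin (n + 1)) : ℕ) :=
        ins_val_lt σ p _ ((p : ℕ) - 1) (by omega) rfl (by omega)
      rw [e1, e2]
      exact congrArg (· + 1) hval.symm
  · rintro ⟨h1, h2⟩ i hi
    have hiLt := i.isLt
    rcases Nat.lt_trichotomy ((i : ℕ) + 1) (p : ℕ) with hlt | heq | hgt
    · -- both positions below p
      have e1 : ((ins σ p i.succ : Fin (n + 2)) : ℕ)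
          = ((σ ⟨(i : ℕ) + 1, by omega⟩ : Fin (n + 1)) : ℕ) :=
        ins_val_lt σ p _ ((i : ℕ) + 1) (by omega) rfl (by omega)
      have e2 : ((ins σ p i.castSucc : Fin (n + 2)) : ℕ)
          = ((σ ⟨(i : ℕ), by omega⟩ : Fin (n + 1)) : ℕ) :=
        ins_val_lt σ p _ (i : ℕ) (by omega) rfl (by omega)
      rw [e1, e2] at hi
      have hj := h1 ⟨(i : ℕ), by omega⟩ hi
      have hj' : (i : ℕ) + 1 = (p : ℕ) := hj
      omega
    · -- successor position is exactly p : new succession iff σ (p-1) = n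
      have e1 : ((ins σ p i.succ : Fin (n + 2)) : ℕ) = n + 1 :=
        ins_val_eq σ p _ heq
      have e2 : ((ins σ p i.castSucc : Fin (n + 2)) : ℕ)
          = ((σ ⟨(i : ℕ), by omega⟩ : Fin (n + 1)) : ℕ) :=
        ins_val_lt σ p _ (i : ℕ) (by omega) rfl (by omega)
      rw [e1, e2] at hi
      have hx := Nat.succ_injective hi.symm
      rcases h2 with h2 | h2
      · omega
      · have e : (⟨(p : ℕ) - 1, by omega⟩ : Fin (n + 1))
            = (⟨(i : ℕ), by omega⟩ : Fin (n + 1)) :=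
          Fin.ext (show (p : ℕ) - 1 = (i : ℕ) by omega)
        rw [e] at h2
        exact h2 hx
    · rcases Nat.eq_or_lt_of_le (Nat.lt_succ_iff.mp hgt) with heq' | hgt'
      · -- position i equals p : value there is the maximum, no succession
        have e2 : ((ins σ p i.castSucc : Fin (n + 2)) : ℕ) = n + 1 :=
          ins_val_eq σ p _ heq'.symm
        rw [e2] at hi
        have := (ins σ p i.succ).isLt
        omega
      · -- both positions above p
        obtain ⟨c, hc⟩ : ∃ c, (i : ℕ) = c + 1 := ⟨(i : ℕ) - 1, by omega⟩
        have e1 : ((ins σ p i.succ : Fin (n + 2)) : ℕ)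
            = ((σ ⟨c + 1, by omega⟩ : Fin (n + 1)) : ℕ) :=
          ins_val_gt σ p _ (c + 1) (by omega) (show (i : ℕ) + 1 = c + 1 + 1 by omega)
            (by omega)
        have e2 : ((ins σ p i.castSucc : Fin (n + 2)) : ℕ)
            = ((σ ⟨c, by omega⟩ : Fin (n + 1)) : ℕ) :=
          ins_val_gt σ p _ c (by omega) (show (i : ℕ) = c + 1 from hc) (by omega)
        rw [e1, e2] at hi
        have hj := h1 ⟨c, by omega⟩ hi
        have hj' : c + 1 = (p : ℕ) := hj
        omega

lemma count_p (σ : Equiv.Perm (Fin (n + 1))) :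
    (Finset.univ.filter fun p : Fin (n + 2) =>
        risingCount (n + 2) (ins σ p) = 0).card =
      (if risingCount (n + 1) σ = 0 then n + 1 else 0) +
        (if risingCount (n + 1) σ = 1 then 1 else 0) := by
  rcases eq_or_ne (risingCount (n + 1) σ) 0 with h0 | h0
  · -- σ has no succession : all insertion positions but one are valid
    rw [if_pos h0, if_neg (by omega)]
    have hall := (risingCount_eq_zero_iff σ).mp h0
    have hx0 := (σ.symm (Fin.last n)).isLt
    have hkey : ∀ x : Fin (n + 1), ((σ x : Fin (n + 1)) : ℕ) = n ↔
        x = σ.symm (Fin.last n) := by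
      intro x
      constructor
      · intro hv
        rw [Equiv.eq_symm_apply]
        exact Fin.ext hv
      · rintro rfl
        rw [Equiv.apply_symm_apply]
        rfl
    have hfe : (Finset.univ.filter fun p : Fin (n + 2) =>
        risingCount (n + 2) (ins σ p) = 0) =
        Finset.univ \ {(⟨((σ.symm (Fin.last n) : Fin (n + 1)) : ℕ) + 1,
          by omega⟩ : Fin (n + 2))} := by
      ext p
      have hpLt := p.isLt
      simp only [Finset.mem_filter, Finset.mem_univ, true_and, Finset.mem_sdiff,
        Finset.mem_singleton]
      rw [valid_iff]
      constructor
      · rintro ⟨-, hB⟩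
        rintro rfl
        rcases hB with hB | hB
        · have hB' : ((σ.symm (Fin.last n) : Fin (n + 1)) : ℕ) + 1 = 0 := hB
          omega
        · have e : (⟨((⟨((σ.symm (Fin.last n) : Fin (n + 1)) : ℕ) + 1,
                by omega⟩ : Fin (n + 2)) : ℕ) - 1, by omega⟩ : Fin (n + 1))
              = σ.symm (Fin.last n) :=
            Fin.ext (show ((σ.symm (Fin.last n) : Fin (n + 1)) : ℕ) + 1 - 1 = _ by omega)
          rw [e] at hB
          exact hB ((hkey _).mpr rfl)
      · intro hpq
        refine ⟨fun j hj => absurd hj (hall j), ?_⟩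
        by_cases hp : (p : ℕ) = 0
        · exact Or.inl hp
        · refine Or.inr fun hv => ?_
          have hxx := (hkey _).mp hv
          have hvv : (p : ℕ) - 1 = ((σ.symm (Fin.last n) : Fin (n + 1)) : ℕ) :=
            congrArg Fin.val hxx
          exact hpq (Fin.ext
            (show (p : ℕ) = ((σ.symm (Fin.last n) : Fin (n + 1)) : ℕ) + 1 by omega))
    rw [hfe, Finset.card_sdiff_of_subset (Finset.subset_univ _), Finset.card_singleton,
      Finset.card_univ, Fintype.card_fin]
    omega
  rcases eq_or_ne (risingCount (n + 1) σ) 1 with h1 | h1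
  · -- σ has exactly one succession : exactly one valid insertion position
    rw [if_neg h0, if_pos h1]
    rw [risingCount_eq] at h1
    obtain ⟨j₀, hj₀⟩ := Finset.card_eq_one.mp h1
    have hj₀Lt := j₀.isLt
    have hmem : ∀ j : Fin n, (((σ j.succ : Fin (n + 1)) : ℕ) =
        ((σ j.castSucc : Fin (n + 1)) : ℕ) + 1) ↔ j = j₀ := by
      intro j
      rw [← mem_riseSet, hj₀, Finset.mem_singleton]
    have hcond := (hmem j₀).mpr rfl
    have hsing : (Finset.univ.filter fun p : Fin (n + 2) =>
        risingCount (n + 2) (ins σ p) = 0) =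
        {(⟨(j₀ : ℕ) + 1, by omega⟩ : Fin (n + 2))} := by
      refine Finset.eq_singleton_iff_unique_mem.mpr ⟨?_, ?_⟩
      · simp only [Finset.mem_filter, Finset.mem_univ, true_and]
        rw [valid_iff]
        refine ⟨fun j hj => ?_, Or.inr fun hv => ?_⟩
        · rw [hmem j] at hj
          subst hj
          rfl
        · have e : (⟨((⟨(j₀ : ℕ) + 1, by omega⟩ : Fin (n + 2)) : ℕ) - 1,
                by omega⟩ : Fin (n + 1)) = j₀.castSucc :=
            Fin.ext (show (j₀ : ℕ) + 1 - 1 = (j₀ : ℕ) by omega)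
          rw [e] at hv
          have hlt := (σ j₀.succ).isLt
          omega
      · intro b hb
        simp only [Finset.mem_filter, Finset.mem_univ, true_and] at hb
        rw [valid_iff] at hb
        exact Fin.ext (hb.1 j₀ hcond).symm
    rw [hsing]
    simp
  · -- σ has at least two successions : no valid insertion position
    rw [if_neg h0, if_neg h1]
    rw [risingCount_eq] at h0 h1
    obtain ⟨a, ha, b, hb, hab⟩ := Finset.one_lt_card.mp (show 1 < (riseSet σ).card by omega)
    rw [Finset.card_eq_zero, Finset.filter_eq_empty_iff]
    intro p _
    rw [valid_iff]
    rintro ⟨hA, -⟩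
    have hha := hA a (mem_riseSet.mp ha)
    have hhb := hA b (mem_riseSet.mp hb)
    exact hab (Fin.ext (by omega))

theorem main (m : ℕ) :
    (noRise (m + 2)).card = (m + 1) * (noRise (m + 1)).card + (oneRise (m + 1)).card := by
  classical
  set S := (Finset.univ : Finset (Equiv.Perm (Fin (m + 1)) × Fin (m + 2))).filter
    (fun x => risingCount (m + 2) (ins x.1 x.2) = 0) with hS
  have hcard : (noRise (m + 2)).card = S.card := by
    refine Finset.card_bij' (fun π _ => (del π, pos π)) (fun x _ => ins x.1 x.2)
      ?_ ?_ ?_ ?_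
    · intro π hπ
      simp only [noRise, Finset.mem_filter, Finset.mem_univ, true_and] at hπ
      simp only [hS, Finset.mem_filter, Finset.mem_univ, true_and]
      rw [ins_del]
      exact hπ
    · intro x hx
      simp only [hS, Finset.mem_filter, Finset.mem_univ, true_and] at hx
      simp only [noRise, Finset.mem_filter, Finset.mem_univ, true_and]
      exact hx
    · intro π hπ
      exact ins_del π
    · intro x hx
      exact Prod.ext (del_ins x.1 x.2) (pos_ins x.1 x.2)
  have hsum : S.card = ∑ σ : Equiv.Perm (Fin (m + 1)),
      (Finset.univ.filter fun p : Fin (m + 2) =>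
        risingCount (m + 2) (ins σ p) = 0).card := by
    rw [hS, Finset.card_filter, ← Finset.univ_product_univ, Finset.sum_product]
    exact Finset.sum_congr rfl (fun σ _ => (Finset.card_filter _ _).symm)
  rw [hcard, hsum]
  rw [Finset.sum_congr rfl (fun σ _ => count_p σ), Finset.sum_add_distrib]
  congr 1
  · rw [← Finset.sum_filter, Finset.sum_const, smul_eq_mul]
    rw [show (Finset.univ.filter fun σ : Equiv.Perm (Fin (m + 1)) =>
      risingCount (m + 1) σ = 0) = noRise (m + 1) from rfl]
    ring
  · rw [← Finset.sum_filter, Finset.sum_const, smul_eq_mul, mul_one]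
    rfl

end NRrec

/-- For `n ≥ 2`, `a(n) = (n-1)·a(n-1) + b(n-1)`. -/
theorem noRise_recurrence_aux (n : ℕ) (hn : 2 ≤ n) :
    (noRise n).card = (n - 1) * (noRise (n - 1)).card + (oneRise (n - 1)).card := by
  obtain ⟨m, rfl⟩ : ∃ m, n = m + 2 := ⟨n - 2, by omega⟩
  simpa using NRrec.main m
end
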